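/- For every ζ ∈ [−1.5, −2/3 − √7/6), the quantity (2ζ + 1)(72ζ³ − 12ζ² − 6ζ + 1) under the square root is nonnegative, the denominator 2(12ζ² + 16ζ + 3) is nonzero, and the two functions A₋(ζ) < A₊(ζ) defined in the context satisfy A₊(ζ) < −1; in particular A₋(ζ) < A₊(ζ) < −1 ≤ s for all s ∈ [−1, 0]. -/
import Mathlib


open Real Set

/-- The critical value `A₊(ζ)` (with `+` before the square root). -/
noncomputable def Aplus (ζ : ℝ) : ℝ :=
  (-(72 * ζ ^ 4 + 108 * ζ ^ 3 + 46 * ζ ^ 2 + 15 * ζ + 3) +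
      3 * (ζ + 1) * (2 * ζ + 1) *
        Real.sqrt ((2 * ζ + 1) * (72 * ζ ^ 3 - 12 * ζ ^ 2 - 6 * ζ + 1))) /
    (2 * (12 * ζ ^ 2 + 16 * ζ + 3))

/-- The critical value `A₋(ζ)` (with `-` before the square root). -/
noncomputable def Aminus (ζ : ℝ) : ℝ :=
  (-(72 * ζ ^ 4 + 108 * ζ ^ 3 + 46 * ζ ^ 2 + 15 * ζ + 3) -
      3 * (ζ + 1) * (2 * ζ + 1) *
        Real.sqrt ((2 * ζ + 1) * (72 * ζ ^ 3 - 12 * ζ ^ 2 - 6 * ζ + 1))) /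
    (2 * (12 * ζ ^ 2 + 16 * ζ + 3))

/-- On `J = [-1.5, -2/3 - √7/6)` the expressions defining `A₋`, `A₊` are well
defined, and `A₋(ζ) < A₊(ζ) < -1 ≤ s` for all `s ∈ [-1, 0]`. -/
theorem Aplus_lt_neg_one
    (ζ : ℝ) (hζ : ζ ∈ Set.Ico (-1.5 : ℝ) (-2 / 3 - Real.sqrt 7 / 6)) :
    0 ≤ (2 * ζ + 1) * (72 * ζ ^ 3 - 12 * ζ ^ 2 - 6 * ζ + 1) ∧
    2 * (12 * ζ ^ 2 + 16 * ζ + 3) ≠ 0 ∧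
    Aminus ζ < Aplus ζ ∧
    Aplus ζ < -1 ∧
    ∀ s ∈ Set.Icc (-1 : ℝ) 0, Aplus ζ < s := by
  obtain ⟨h1, h2⟩ := hζ
  have hupos : (0 : ℝ) < Real.sqrt 7 := Real.sqrt_pos.mpr (by norm_num)
  have husq : Real.sqrt 7 ^ 2 = 7 := Real.sq_sqrt (by norm_num)
  have hu26 : (2.6 : ℝ) < Real.sqrt 7 := by
    nlinarith [husq, hupos]
  have hz11 : ζ < -1.1 := by
    have : Real.sqrt 7 / 6 > 2.6 / 6 := by linarith
    linarith
  have h15 : (-1.5 : ℝ) ≤ ζ := h1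
  -- denominator positive
  have hden : 0 < 12 * ζ ^ 2 + 16 * ζ + 3 := by
    have ha : 6 * ζ + 4 + Real.sqrt 7 < 0 := by linarith
    have hb : 6 * ζ + 4 - Real.sqrt 7 < 0 := by linarith
    nlinarith [mul_pos (neg_pos.mpr ha) (neg_pos.mpr hb), husq]
  have h2z : 2 * ζ + 1 < 0 := by linarith
  have hz1 : ζ + 1 < 0 := by linarith
  have hcub : 72 * ζ ^ 3 - 12 * ζ ^ 2 - 6 * ζ + 1 < 0 := by nlinarith
  have hRpos : 0 < (2 * ζ + 1) * (72 * ζ ^ 3 - 12 * ζ ^ 2 - 6 * ζ + 1) :=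
    mul_pos_of_neg_of_neg h2z hcub
  set r := Real.sqrt ((2 * ζ + 1) * (72 * ζ ^ 3 - 12 * ζ ^ 2 - 6 * ζ + 1)) with hr
  have hrpos : 0 < r := Real.sqrt_pos.mpr hRpos
  have hrsq : r ^ 2 = (2 * ζ + 1) * (72 * ζ ^ 3 - 12 * ζ ^ 2 - 6 * ζ + 1) :=
    Real.sq_sqrt hRpos.le
  have hT : 0 < 3 * (ζ + 1) * (2 * ζ + 1) := by nlinarith
  -- P4 - D > 0
  have hPD : 0 < 72 * ζ ^ 4 + 108 * ζ ^ 3 + 22 * ζ ^ 2 - 17 * ζ - 3 := by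
    nlinarith [sq_nonneg (ζ + 1.3), sq_nonneg (ζ + 1.1), sq_nonneg (ζ + 1.5),
      sq_nonneg ((ζ + 1.1) * (ζ + 1.5)), mul_pos (neg_pos.mpr hz1) (neg_pos.mpr hz1)]
  -- key squared comparison
  have hquad : 0 < 36 * ζ ^ 2 + 12 * ζ - 7 := by nlinarith
  have hE : (3 * (ζ + 1) * (2 * ζ + 1)) ^ 2 *
      ((2 * ζ + 1) * (72 * ζ ^ 3 - 12 * ζ ^ 2 - 6 * ζ + 1)) <
      (72 * ζ ^ 4 + 108 * ζ ^ 3 + 22 * ζ ^ 2 - 17 * ζ - 3) ^ 2 := by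
    have key : (72 * ζ ^ 4 + 108 * ζ ^ 3 + 22 * ζ ^ 2 - 17 * ζ - 3) ^ 2 -
        (3 * (ζ + 1) * (2 * ζ + 1)) ^ 2 *
          ((2 * ζ + 1) * (72 * ζ ^ 3 - 12 * ζ ^ 2 - 6 * ζ + 1)) =
        4 * (-ζ) * (ζ + 1) ^ 2 * (12 * ζ ^ 2 + 16 * ζ + 3) *
          (36 * ζ ^ 2 + 12 * ζ - 7) := by ring
    have hzneg : 0 < -ζ := by linarith
    have h1sq : 0 < (ζ + 1) ^ 2 := by nlinarith [mul_pos (neg_pos.mpr hz1) (neg_pos.mpr hz1)]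
    have pos : 0 < 4 * (-ζ) * (ζ + 1) ^ 2 * (12 * ζ ^ 2 + 16 * ζ + 3) * (36 * ζ ^ 2 + 12 * ζ - 7) :=
      mul_pos (mul_pos (mul_pos (mul_pos (show (0:ℝ) < 4 by norm_num) hzneg) h1sq) hden) hquad
    linarith [key, pos]
  have hTr : 3 * (ζ + 1) * (2 * ζ + 1) * r <
      72 * ζ ^ 4 + 108 * ζ ^ 3 + 22 * ζ ^ 2 - 17 * ζ - 3 := by
    refine lt_of_pow_lt_pow_left₀ 2 hPD.le ?_
    calc (3 * (ζ + 1) * (2 * ζ + 1) * r) ^ 2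
        = (3 * (ζ + 1) * (2 * ζ + 1)) ^ 2 * r ^ 2 := by ring
      _ = (3 * (ζ + 1) * (2 * ζ + 1)) ^ 2 *
            ((2 * ζ + 1) * (72 * ζ ^ 3 - 12 * ζ ^ 2 - 6 * ζ + 1)) := by rw [hrsq]
      _ < _ := hE
  have hDpos : 0 < 2 * (12 * ζ ^ 2 + 16 * ζ + 3) := by linarith
  refine ⟨hRpos.le, ne_of_gt hDpos, ?_, ?_, ?_⟩
  · unfold Aminus Aplus
    rw [div_lt_div_iff₀ hDpos hDpos]
    have := mul_pos hT hrpos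
    nlinarith [mul_pos (mul_pos hT hrpos) hDpos]
  · unfold Aplus
    rw [div_lt_iff₀ hDpos]
    linarith [hTr]
  · intro s hs
    have hA : Aplus ζ < -1 := by
      unfold Aplus
      rw [div_lt_iff₀ hDpos]
      linarith [hTr]
    linarith [hs.1]
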